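/- Let Q be a finitely splitting lim-sup tree forcing and let J be any ideal on the branch space extending 𝕀 (e.g. the <2^{ℵ0}-closure of 𝕀). Call X measurable if for every T ∈ Q there is S ∈ Q, S ⊆ T, with lim(S) ∩ X ∈ J or lim(S) ∖ X ∈ J. Then the family of measurable sets contains all closed subsets of lim(T_max) and is closed under complements and countable unions (hence contains all Borel sets). -/

import Mathlib

namespace Sacch

/-- The length-`n` initial segment of an infinite sequence, as a list. -/
def restr (b : ℕ → ℕ) (n : ℕ) : List ℕ := List.ofFn fun i : Fin n => b i

/-- A tree on ω: a set of finite sequences closed under initial segments. -/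
def IsTree (T : Set (List ℕ)) : Prop :=
  ∀ s t : List ℕ, s <+: t → t ∈ T → s ∈ T

/-- The set of immediate successors of `t` in `T`. -/
def succs (T : Set (List ℕ)) (t : List ℕ) : Set (List ℕ) :=
  {s | s ∈ T ∧ ∃ k : ℕ, s = t ++ [k]}

/-- `T` is finitely splitting: every node has finitely many immediate successors. -/
def FinSplit (T : Set (List ℕ)) : Prop :=
  ∀ t ∈ T, (succs T t).Finite

/-- `b` is a chain in `T`: a pairwise `≼`-comparable subset of `T`. -/
def IsChainIn (T b : Set (List ℕ)) : Prop :=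
  b ⊆ T ∧ ∀ s ∈ b, ∀ t ∈ b, s <+: t ∨ t <+: s

/-- `b` is a branch of `T`: a maximal chain. -/
def IsBranch (T b : Set (List ℕ)) : Prop :=
  IsChainIn T b ∧ ∀ b', IsChainIn T b' → b ⊆ b' → b' = b

/-- `A` is an antichain: pairwise `≼`-incomparable. -/
def IsAntichainIn (A : Set (List ℕ)) : Prop :=
  ∀ s ∈ A, ∀ t ∈ A, s ≠ t → ¬(s <+: t ∨ t <+: s)

/-- `F` is a front of `T`: an antichain in `T` meeting every branch of `T`. -/
def IsFront (T F : Set (List ℕ)) : Prop :=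
  F ⊆ T ∧ IsAntichainIn F ∧ ∀ b, IsBranch T b → ∃ t ∈ b, t ∈ F

/-- The norm `μ_T(t)` of a node `t` in a subtree `T`: the `μ`-value of its
set of immediate `T`-successors. -/
noncomputable def normOf (μ : List ℕ → Set (List ℕ) → ℝ)
    (T : Set (List ℕ)) (t : List ℕ) : ℝ := μ t (succs T t)

/-- Along the branch `b` of `T`, `limsup μ_T(b ↾ n) = ∞`. -/
def BranchLimsupInf (μ : List ℕ → Set (List ℕ) → ℝ)
    (T b : Set (List ℕ)) : Prop :=
  ∀ m : ℝ, ∀ N : ℕ, ∃ t ∈ b, N ≤ t.length ∧ m < normOf μ T t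

/-- The standing assumptions on `(Tmax, μ)` making a finitely splitting
lim-sup tree forcing: `Tmax` is a nonempty finitely splitting tree, `μ`
assigns non-negative reals monotonically to sets of successors, singletons
have norm `< 1` and along every branch of `Tmax` the limsup of the norms
is infinite. -/
structure LimSupForcing (Tmax : Set (List ℕ))
    (μ : List ℕ → Set (List ℕ) → ℝ) : Prop where
  tree : IsTree Tmax
  nonempty : Tmax.Nonempty
  finSplit : FinSplit Tmax
  mono : ∀ t : List ℕ, ∀ A B : Set (List ℕ), A ⊆ B → μ t A ≤ μ t B
  nonneg : ∀ t A, 0 ≤ μ t A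
  singleton_lt_one : ∀ t s : List ℕ, μ t {s} < 1
  limsup : ∀ b, IsBranch Tmax b → BranchLimsupInf μ Tmax b

/-- `T ∈ Q`: `T` is a condition of the lim-sup tree forcing `Q = Q(Tmax, μ)`,
i.e. a nonempty subtree of `Tmax` along each of whose branches the limsup of
the norms is infinite. -/
def memQ (Tmax : Set (List ℕ)) (μ : List ℕ → Set (List ℕ) → ℝ)
    (T : Set (List ℕ)) : Prop :=
  T.Nonempty ∧ T ⊆ Tmax ∧ IsTree T ∧
    ∀ b, IsBranch T b → BranchLimsupInf μ T b

/-- `T` is `n`-dense: there is a front of `T` all of whose nodes have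
norm `> n`. -/
def nDense (μ : List ℕ → Set (List ℕ) → ℝ) (T : Set (List ℕ)) (n : ℕ) : Prop :=
  ∃ F, IsFront T F ∧ ∀ t ∈ F, (n : ℝ) < normOf μ T t

end Sacch

namespace Sacch

/-- The branch space of a tree: the set of infinite branches
`lim(T) = {b ∈ ω^ω : ∀ n, b ↾ n ∈ T}`. -/
def Lim (T : Set (List ℕ)) : Set (ℕ → ℕ) :=
  {b | ∀ n : ℕ, restr b n ∈ T}

/-- `X ∈ 𝕀`: for every `S ∈ Q` there is `T ∈ Q`, `T ⊆ S`, with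
`X ∩ lim(T) = ∅`. -/
def memI (Tmax : Set (List ℕ)) (μ : List ℕ → Set (List ℕ) → ℝ)
    (X : Set (ℕ → ℕ)) : Prop :=
  ∀ S, memQ Tmax μ S → ∃ T, memQ Tmax μ T ∧ T ⊆ S ∧ X ∩ Lim T = ∅

end Sacch

namespace Sacch

/-- `X` is measurable with respect to the ideal `J`: every `T ∈ Q` has a
subtree `S ∈ Q` on which `X` or its complement is `J`-null. -/
def MeasJ (Tmax : Set (List ℕ)) (μ : List ℕ → Set (List ℕ) → ℝ)
    (J : Set (Set (ℕ → ℕ))) (X : Set (ℕ → ℕ)) : Prop :=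
  ∀ T, memQ Tmax μ T → ∃ S, memQ Tmax μ S ∧ S ⊆ T ∧
    (Lim S ∩ X ∈ J ∨ Lim S \ X ∈ J)

end Sacch

namespace Sacch

-- ################ auxiliary lemmas ################

lemma prefix_total {a b c : List ℕ} (h1 : a <+: c) (h2 : b <+: c) :
    a <+: b ∨ b <+: a := List.prefix_or_prefix_of_prefix h1 h2

lemma prefix_of_comp_le {a b : List ℕ} (h : a <+: b ∨ b <+: a)
    (hl : a.length ≤ b.length) : a <+: b := by
  rcases h with h | h
  · exact h
  · have : b = a := h.eq_of_length (le_antisymm h.length_le hl)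
    subst this; exact h

lemma ne_of_length_lt {a b : List ℕ} (hl : a.length < b.length) : a ≠ b := by
  intro he; rw [he] at hl; omega

lemma exists_succ_prefix {s t : List ℕ} (hp : s <+: t) (hl : s.length < t.length) :
    ∃ k, s ++ [k] <+: t := by
  obtain ⟨r, rfl⟩ := hp
  cases r with
  | nil => simp at hl
  | cons k r' => exact ⟨k, ⟨r', by simp⟩⟩

lemma prefix_lt_length {a b : List ℕ} (hp : a <+: b) (hne : a ≠ b) : a.length < b.length :=
  lt_of_le_of_ne hp.length_le (fun he => hne (hp.eq_of_length he))

@[simp] lemma restr_length (b : ℕ → ℕ) (n : ℕ) : (restr b n).length = n := by simp [restr]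

lemma restr_succ (b : ℕ → ℕ) (n : ℕ) : restr b (n+1) = restr b n ++ [b n] := by
  rw [restr, List.ofFn_succ', List.concat_eq_append]; rfl

lemma restr_prefix (b : ℕ → ℕ) {m n : ℕ} (hmn : m ≤ n) : restr b m <+: restr b n := by
  induction n with
  | zero => have : m = 0 := by omega
            subst this; exact List.prefix_rfl
  | succ n ih =>
    rcases Nat.lt_or_ge m (n+1) with hlt | hge
    · exact (ih (by omega)).trans (by rw [restr_succ]; exact ⟨[b n], rfl⟩)
    · have : m = n + 1 := by omega
      subst this; exact List.prefix_rfl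

lemma eq_restr_of_prefix {s : List ℕ} {b : ℕ → ℕ} {n : ℕ} (hp : s <+: restr b n) :
    s = restr b s.length := by
  have h1 : s.length ≤ n := by have := hp.length_le; simpa using this
  have h2 : restr b s.length <+: restr b n := restr_prefix b h1
  have h3 := prefix_total hp h2
  exact (prefix_of_comp_le h3 (by simp)).eq_of_length (by simp)

lemma apply_eq_of_restr_eq {c x : ℕ → ℕ} {n i : ℕ} (hr : restr c n = restr x n)
    (hi : i < n) : c i = x i := by
  have := congrFun (List.ofFn_inj.mp hr) ⟨i, hi⟩
  simpa using this

lemma Lim_mono {T T' : Set (List ℕ)} (hs : T ⊆ T') : Lim T ⊆ Lim T' :=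
  fun x hx n => hs (hx n)

lemma nil_mem_of_tree {T : Set (List ℕ)} (hT : IsTree T) (hne : T.Nonempty) : [] ∈ T := by
  obtain ⟨t, ht⟩ := hne
  exact hT [] t (List.nil_prefix) ht

lemma branch_absorb {T b : Set (List ℕ)} {s : List ℕ} (hb : IsBranch T b) (hsT : s ∈ T)
    (hcomp : ∀ u ∈ b, s <+: u ∨ u <+: s) : s ∈ b := by
  have h1 : IsChainIn T (insert s b) := by
    constructor
    · intro w hw
      rcases hw with rfl | hw
      · exact hsT
      · exact hb.1.1 hw
    · intro x hx y hy
      rcases hx with rfl | hx <;> rcases hy with rfl | hy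
      · exact Or.inl List.prefix_rfl
      · exact hcomp y hy
      · exact (hcomp x hx).symm
      · exact hb.1.2 x hx y hy
  have h2 := hb.2 _ h1 (Set.subset_insert _ _)
  rw [← h2]; exact Set.mem_insert _ _

lemma exists_branch_extend {T c : Set (List ℕ)} (hc : IsChainIn T c) :
    ∃ b, IsBranch T b ∧ c ⊆ b := by
  have hub : ∀ C ⊆ {d | IsChainIn T d}, IsChain (· ⊆ ·) C → C.Nonempty →
      ∃ ub ∈ {d | IsChainIn T d}, ∀ s ∈ C, s ⊆ ub := by
    intro C hCsub hCchain _
    refine ⟨⋃₀ C, ⟨?_, ?_⟩, fun d hd => Set.subset_sUnion_of_mem hd⟩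
    · rintro w ⟨d, hd, hw⟩
      exact (hCsub hd).1 hw
    · rintro x ⟨d1, hd1, hx⟩ y ⟨d2, hd2, hy⟩
      by_cases he : d1 = d2
      · subst he; exact (hCsub hd1).2 x hx y hy
      · rcases hCchain hd1 hd2 he with hss | hss
        · exact (hCsub hd2).2 x (hss hx) y hy
        · exact (hCsub hd1).2 x hx y (hss hy)
  obtain ⟨m, hcm, hmax⟩ := zorn_subset_nonempty {d | IsChainIn T d} hub c hc
  exact ⟨m, ⟨hmax.1, fun b' hb' hsub => Set.Subset.antisymm (hmax.2 hb' hsub) hsub⟩, hcm⟩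

lemma exists_branch_through {T : Set (List ℕ)} {s : List ℕ} (hT : IsTree T) (hs : s ∈ T) :
    ∃ b, IsBranch T b ∧ s ∈ b := by
  have hc : IsChainIn T {w | w <+: s} :=
    ⟨fun w hw => hT w s hw hs, fun x hx y hy => prefix_total hx hy⟩
  obtain ⟨b, hb, hsub⟩ := exists_branch_extend hc
  exact ⟨b, hb, hsub List.prefix_rfl⟩

lemma front_comp {T F : Set (List ℕ)} {s : List ℕ} (hT : IsTree T) (hF : IsFront T F)
    (hs : s ∈ T) : ∃ g ∈ F, s <+: g ∨ g <+: s := by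
  obtain ⟨b, hb, hsb⟩ := exists_branch_through hT hs
  obtain ⟨g, hgb, hgF⟩ := hF.2.2 b hb
  exact ⟨g, hgF, hb.1.2 s hsb g hgb⟩

-- ############ memQ facts ############

lemma memQ_tree {Tmax T : Set (List ℕ)} {μ : List ℕ → Set (List ℕ) → ℝ}
    (hQ : memQ Tmax μ T) : IsTree T := hQ.2.2.1

lemma branch_unbdd_of_memQ {Tmax T b : Set (List ℕ)} {μ : List ℕ → Set (List ℕ) → ℝ}
    (hQ : memQ Tmax μ T) (hb : IsBranch T b) (N : ℕ) : ∃ s ∈ b, N ≤ s.length := by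
  obtain ⟨t, htb, htl, _⟩ := hQ.2.2.2 b hb 0 N
  exact ⟨t, htb, htl⟩

lemma nde_of_memQ {Tmax T : Set (List ℕ)} {μ : List ℕ → Set (List ℕ) → ℝ} {s : List ℕ}
    (hQ : memQ Tmax μ T) (hs : s ∈ T) : ∃ s' ∈ T, s <+: s' ∧ s ≠ s' := by
  obtain ⟨b, hb, hsb⟩ := exists_branch_through hQ.2.2.1 hs
  obtain ⟨t, htb, htl⟩ := branch_unbdd_of_memQ hQ hb (s.length + 1)
  have hst : s <+: t := prefix_of_comp_le (hb.1.2 s hsb t htb) (by omega)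
  refine ⟨t, hb.1.1 htb, hst, ?_⟩
  intro he; rw [he] at htl; omega

lemma succs_nonempty {Tmax T : Set (List ℕ)} {μ : List ℕ → Set (List ℕ) → ℝ} {s : List ℕ}
    (hQ : memQ Tmax μ T) (hs : s ∈ T) : (succs T s).Nonempty := by
  obtain ⟨s', hs', hpre, hne⟩ := nde_of_memQ hQ hs
  obtain ⟨k, hk⟩ := exists_succ_prefix hpre (prefix_lt_length hpre hne)
  exact ⟨s ++ [k], hQ.2.2.1 _ _ hk hs', k, rfl⟩

-- ############ norm facts ############

lemma succs_mono {S T : Set (List ℕ)} {t : List ℕ} (hs : S ⊆ T) : succs S t ⊆ succs T t :=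
  fun v hv => ⟨hs hv.1, hv.2⟩

lemma norm_mono {Tmax : Set (List ℕ)} {μ : List ℕ → Set (List ℕ) → ℝ}
    (h : LimSupForcing Tmax μ) {S T : Set (List ℕ)} {t : List ℕ} (hST : S ⊆ T) :
    normOf μ S t ≤ normOf μ T t := h.mono t _ _ (succs_mono hST)

lemma limsup_lift {Tmax : Set (List ℕ)} {μ : List ℕ → Set (List ℕ) → ℝ}
    (h : LimSupForcing Tmax μ) {S T b : Set (List ℕ)} (hS : S ⊆ T)
    (hb : BranchLimsupInf μ S b) : BranchLimsupInf μ T b := by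
  intro m N
  obtain ⟨t, htb, htl, htn⟩ := hb m N
  exact ⟨t, htb, htl, lt_of_lt_of_le htn (norm_mono h hS)⟩

-- ############ restrAt ############

def restrAt (T : Set (List ℕ)) (t : List ℕ) : Set (List ℕ) :=
  {s | s ∈ T ∧ (s <+: t ∨ t <+: s)}

lemma restrAt_subset {T : Set (List ℕ)} {t : List ℕ} : restrAt T t ⊆ T := fun _ hs => hs.1

lemma restrAt_memQ {Tmax T : Set (List ℕ)} {μ : List ℕ → Set (List ℕ) → ℝ}
    (h : LimSupForcing Tmax μ) (hQ : memQ Tmax μ T) {t : List ℕ} (ht : t ∈ T) :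
    memQ Tmax μ (restrAt T t) := by
  have htree : IsTree (restrAt T t) := by
    intro s s' hp hs'
    refine ⟨hQ.2.2.1 s s' hp hs'.1, ?_⟩
    rcases hs'.2 with hc | hc
    · exact Or.inl (hp.trans hc)
    · exact prefix_total hp hc
  refine ⟨⟨t, ht, Or.inl List.prefix_rfl⟩, fun s hs => hQ.2.1 hs.1, htree, ?_⟩
  intro b hb
  have htb : t ∈ b := by
    apply branch_absorb hb ⟨ht, Or.inl List.prefix_rfl⟩
    intro u hu
    exact (hb.1.1 hu).2.symm
  have hbT : IsBranch T b := by
    obtain ⟨bb, hbb, hsub⟩ := exists_branch_extend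
      (⟨fun w hw => (hb.1.1 hw).1, hb.1.2⟩ : IsChainIn T b)
    have hsub2 : bb ⊆ restrAt T t := fun w hw =>
      ⟨hbb.1.1 hw, (hbb.1.2 w hw t (hsub htb))⟩
    have heq : bb = b := hb.2 bb ⟨hsub2, hbb.1.2⟩ hsub
    exact heq ▸ hbb
  have hlim := hQ.2.2.2 b hbT
  intro m N
  obtain ⟨s, hsb, hsl, hsn⟩ := hlim m (max N t.length)
  have hts : t <+: s := prefix_of_comp_le (hb.1.2 t htb s hsb)
    (le_trans (le_max_right _ _) hsl)
  refine ⟨s, hsb, le_trans (le_max_left _ _) hsl, ?_⟩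
  have hsucc : succs T s ⊆ succs (restrAt T t) s := by
    rintro v ⟨hvT, k, rfl⟩
    exact ⟨⟨hvT, Or.inr (hts.trans ⟨[k], rfl⟩)⟩, k, rfl⟩
  exact lt_of_lt_of_le hsn (h.mono s _ _ hsucc)

-- ############ fronts ############

lemma exists_front {Tmax T : Set (List ℕ)} {μ : List ℕ → Set (List ℕ) → ℝ}
    (h : LimSupForcing Tmax μ) (hQ : memQ Tmax μ T) (r : ℝ) (N : ℕ) :
    ∃ F, IsFront T F ∧ ∀ s ∈ F, N ≤ s.length ∧ r < normOf μ T s := by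
  classical
  set P : List ℕ → Prop := fun s => s ∈ T ∧ N ≤ s.length ∧ r < normOf μ T s with hPdef
  refine ⟨{s | P s ∧ ∀ s', P s' → s' <+: s → s' = s}, ⟨?_, ?_, ?_⟩, ?_⟩
  · exact fun s hs => hs.1.1
  · intro x hx y hy hxy hcomp
    rcases hcomp with hc | hc
    · exact hxy (hy.2 x hx.1 hc)
    · exact hxy ((hx.2 y hy.1 hc).symm)
  · intro b hb
    obtain ⟨t, htb, htl, htn⟩ := hQ.2.2.2 b hb r N
    have htP : P t := ⟨hb.1.1 htb, htl, htn⟩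
    have hex : ∃ k, k ≤ t.length ∧ P (t.take k) := ⟨t.length, le_rfl, by simpa using htP⟩
    set k₀ := Nat.find hex with hk₀def
    obtain ⟨hk₀le, hk₀P⟩ := Nat.find_spec hex
    have htake_len : (t.take k₀).length = k₀ := by
      rw [List.length_take]; omega
    refine ⟨t.take k₀, ?_, ?_, ?_⟩
    · apply branch_absorb hb hk₀P.1
      intro u hu
      rcases hb.1.2 u hu t htb with hc | hc
      · exact prefix_total (List.take_prefix _ _) hc
      · exact Or.inl ((List.take_prefix _ _).trans hc)
    · exact hk₀P
    · intro s' hs' hpre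
      have h1 : s' <+: t := hpre.trans (List.take_prefix _ _)
      have h2 : s' = t.take s'.length := List.prefix_iff_eq_take.mp h1
      have h4 : k₀ ≤ s'.length := Nat.find_min' hex ⟨h1.length_le, h2 ▸ hs'⟩
      apply hpre.eq_of_length
      have := hpre.length_le
      omega
  · exact fun s hs => ⟨hs.1.2.1, hs.1.2.2⟩

lemma front_succs {Tmax T F : Set (List ℕ)} {μ : List ℕ → Set (List ℕ) → ℝ}
    (hQ : memQ Tmax μ T) (hF : IsFront T F) :
    IsFront T {u | ∃ t ∈ F, u ∈ succs T t} := by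
  have key : ∀ t k t' k', t ∈ F → t' ∈ F → (t++[k]) <+: (t'++[k']) →
      t++[k] ≠ t'++[k'] → False := by
    intro t k t' k' htF ht'F hpre hne
    have hlen : (t++[k]).length < (t'++[k']).length := prefix_lt_length hpre hne
    simp only [List.length_append, List.length_singleton] at hlen
    have h1 : t ++ [k] <+: t' := prefix_of_comp_le
      (prefix_total hpre ⟨[k'], rfl⟩) (by simp; omega)
    have h2 : t <+: t' := (List.prefix_append t [k]).trans h1
    have h3 : t ≠ t' := by
      have := h1.length_le
      apply ne_of_length_lt
      simp at this; omega
    exact hF.2.1 t htF t' ht'F h3 (Or.inl h2)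
  refine ⟨?_, ?_, ?_⟩
  · rintro u ⟨t, htF, huT, k, rfl⟩
    exact huT
  · rintro x ⟨t, htF, hxT, k, rfl⟩ y ⟨t', ht'F, hyT, k', rfl⟩ hxy hcomp
    rcases hcomp with hc | hc
    · exact key t k t' k' htF ht'F hc hxy
    · exact key t' k' t k ht'F htF hc (Ne.symm hxy)
  · intro b hb
    obtain ⟨f, hfb, hfF⟩ := hF.2.2 b hb
    obtain ⟨s, hsb, hsl⟩ := branch_unbdd_of_memQ hQ hb (f.length + 1)
    have hfs : f <+: s := prefix_of_comp_le (hb.1.2 f hfb s hsb) (by omega)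
    obtain ⟨k, hk⟩ := exists_succ_prefix hfs (by omega)
    have hmem : f ++ [k] ∈ T := hQ.2.2.1 _ _ hk (hb.1.1 hsb)
    have hmb : f ++ [k] ∈ b := by
      apply branch_absorb hb hmem
      intro u hu
      rcases hb.1.2 u hu s hsb with hc | hc
      · exact prefix_total hk hc
      · exact Or.inl (hk.trans hc)
    exact ⟨f ++ [k], hmb, f, hfF, hmem, k, rfl⟩

-- ############ amalgamation ############

lemma amalg {Tmax : Set (List ℕ)} {μ : List ℕ → Set (List ℕ) → ℝ}
    (h : LimSupForcing Tmax μ) {Tn : Set (List ℕ)} (hTn : memQ Tmax μ Tn)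
    {U : Set (List ℕ)} (hU : IsFront Tn U) {S : List ℕ → Set (List ℕ)}
    (hSQ : ∀ u ∈ U, memQ Tmax μ (S u)) (hSsub : ∀ u ∈ U, S u ⊆ restrAt Tn u) :
    (∀ u ∈ U, u ∈ S u) ∧ {s | ∃ u ∈ U, s ∈ S u} ⊆ Tn ∧
    memQ Tmax μ {s | ∃ u ∈ U, s ∈ S u} ∧
    (∀ b, IsBranch {s | ∃ u ∈ U, s ∈ S u} b → ∃ u ∈ U, b ⊆ S u ∧ IsBranch (S u) b) ∧
    (∀ x ∈ Lim {s | ∃ u ∈ U, s ∈ S u}, ∃ u ∈ U, x ∈ Lim (S u)) := by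
  set T' := {s | ∃ u ∈ U, s ∈ S u} with hT'def
  have huS : ∀ u ∈ U, u ∈ S u := by
    intro u hu
    obtain ⟨s₀, hs₀⟩ := (hSQ u hu).1
    obtain ⟨b, hb, hs₀b⟩ := exists_branch_through (hSQ u hu).2.2.1 hs₀
    obtain ⟨s, hsb, hsl⟩ := branch_unbdd_of_memQ (hSQ u hu) hb u.length
    have hsS : s ∈ S u := hb.1.1 hsb
    have hus : u <+: s := prefix_of_comp_le (Or.symm (hSsub u hu hsS).2) hsl
    exact (hSQ u hu).2.2.1 u s hus hsS
  have hsub : T' ⊆ Tn := by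
    rintro s ⟨u, hu, hsu⟩
    exact (hSsub u hu hsu).1
  have htree : IsTree T' := by
    rintro s s' hp ⟨u, hu, hs'⟩
    exact ⟨u, hu, (hSQ u hu).2.2.1 s s' hp hs'⟩
  have hUne : U.Nonempty := by
    obtain ⟨b, hb, _⟩ := exists_branch_through hTn.2.2.1
      (nil_mem_of_tree hTn.2.2.1 hTn.1)
    obtain ⟨g, _, hgU⟩ := hU.2.2 b hb
    exact ⟨g, hgU⟩
  have hne : T'.Nonempty := by
    obtain ⟨u, hu⟩ := hUne
    exact ⟨u, u, hu, huS u hu⟩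
  have huniq : ∀ u ∈ U, ∀ u' ∈ U, ∀ w, w ∈ S u' → u <+: w → w ∈ S u := by
    intro u hu u' hu' w hw hp
    by_cases he : u' = u
    · exact he ▸ hw
    have hcomp : u <+: u' ∨ u' <+: u := by
      rcases (hSsub u' hu' hw).2 with hc | hc
      · exact Or.inl (hp.trans hc)
      · exact prefix_total hp hc
    exact absurd hcomp (hU.2.1 u hu u' hu' (fun q => he q.symm))
  have hbranch : ∀ b, IsBranch T' b → ∃ u ∈ U, b ⊆ S u ∧ IsBranch (S u) b := by
    intro b hb
    have hbchain : IsChainIn Tn b := ⟨fun w hw => hsub (hb.1.1 hw), hb.1.2⟩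
    obtain ⟨bb, hbb, hbsub⟩ := exists_branch_extend hbchain
    obtain ⟨u, hub, huU⟩ := hU.2.2 bb hbb
    have hub2 : u ∈ b := branch_absorb hb ⟨u, huU, huS u huU⟩
      (fun w hw => hbb.1.2 u hub w (hbsub hw))
    have hbSu : b ⊆ S u := by
      intro w hw
      obtain ⟨u', hu', hwu'⟩ := hb.1.1 hw
      rcases hb.1.2 w hw u hub2 with hc | hc
      · exact (hSQ u huU).2.2.1 w u hc (huS u huU)
      · exact huniq u huU u' hu' w hwu' hc
    refine ⟨u, huU, hbSu, ⟨⟨hbSu, hb.1.2⟩, ?_⟩⟩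
    intro c hc hbc
    exact hb.2 c ⟨fun w hw => ⟨u, huU, hc.1 hw⟩, hc.2⟩ hbc
  have hQ' : memQ Tmax μ T' := by
    refine ⟨hne, fun s hs => hTn.2.1 (hsub hs), htree, ?_⟩
    intro b hb
    obtain ⟨u, huU, hbSu, hbr⟩ := hbranch b hb
    exact limsup_lift h (fun w hw => ⟨u, huU, hw⟩) ((hSQ u huU).2.2.2 b hbr)
  refine ⟨huS, hsub, hQ', hbranch, ?_⟩
  intro x hx
  have hchain : IsChainIn Tn {w | ∃ n, w = restr x n} := by
    constructor
    · rintro w ⟨n, rfl⟩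
      exact hsub (hx n)
    · rintro w ⟨n, rfl⟩ w' ⟨n', rfl⟩
      rcases le_total n n' with hle | hle
      · exact Or.inl (restr_prefix x hle)
      · exact Or.inr (restr_prefix x hle)
  obtain ⟨bb, hbb, hbsub⟩ := exists_branch_extend hchain
  obtain ⟨u, hub, huU⟩ := hU.2.2 bb hbb
  have hu_eq : u = restr x u.length := by
    have h1 : restr x u.length ∈ bb := hbsub ⟨u.length, rfl⟩
    rcases hbb.1.2 u hub _ h1 with hc | hc
    · exact hc.eq_of_length (by simp)
    · exact (hc.eq_of_length (by simp)).symm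
  refine ⟨u, huU, fun n => ?_⟩
  rcases le_or_gt n u.length with hle | hlt
  · have hp : restr x n <+: u := by
      rw [hu_eq]; exact restr_prefix x hle
    exact (hSQ u huU).2.2.1 _ u hp (huS u huU)
  · obtain ⟨u', hu', hmem⟩ := hx n
    have hp : u <+: restr x n := by
      rw [hu_eq]; exact restr_prefix x (le_of_lt hlt)
    exact huniq u huU u' hu' _ hmem hp
-- ############ fusion ############

lemma fusion {Tmax : Set (List ℕ)} {μ : List ℕ → Set (List ℕ) → ℝ}
    (h : LimSupForcing Tmax μ) (Tseq Fseq : ℕ → Set (List ℕ))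
    (hQ : ∀ n, memQ Tmax μ (Tseq n))
    (hF : ∀ n, IsFront (Tseq n) (Fseq n))
    (hlen : ∀ n, ∀ f ∈ Fseq n, n ≤ f.length)
    (hnorm : ∀ n, ∀ f ∈ Fseq n, (n : ℝ) < normOf μ (Tseq n) f)
    (hsub : ∀ n, Tseq (n+1) ⊆ Tseq n)
    (hext : ∀ n, ∀ g ∈ Fseq (n+1), ∃ f ∈ Fseq n, f <+: g ∧ f ≠ g)
    (hkeep1 : ∀ n, ∀ v ∈ Tseq n, (∃ g ∈ Fseq n, v <+: g) → v ∈ Tseq (n+1))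
    (hkeep2 : ∀ n, ∀ g ∈ Fseq n, succs (Tseq n) g ⊆ Tseq (n+1)) :
    memQ Tmax μ {s | ∀ n, s ∈ Tseq n} := by
  set Tinf := {s | ∀ n, s ∈ Tseq n} with hTinf
  have hanti : ∀ {n m : ℕ}, n ≤ m → Tseq m ⊆ Tseq n := by
    intro n m hnm
    induction m with
    | zero => have : n = 0 := by omega
              subst this; exact subset_rfl
    | succ m ih =>
      rcases Nat.lt_or_ge n (m+1) with hlt | hge
      · exact (hsub m).trans (ih (by omega))
      · have : n = m + 1 := by omega
        subst this; exact subset_rfl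
  have hdesc : ∀ n m, n < m → ∀ g ∈ Fseq m, ∃ f ∈ Fseq n, f <+: g ∧ f ≠ g := by
    intro n m hnm
    induction m with
    | zero => omega
    | succ m ih =>
      intro g hg
      rcases Nat.lt_or_ge n m with hlt | hge
      · obtain ⟨f', hf', hp', hne'⟩ := hext m g hg
        obtain ⟨f, hf, hp, hne⟩ := ih hlt f' hf'
        refine ⟨f, hf, hp.trans hp', ?_⟩
        have l1 := prefix_lt_length hp hne
        have l2 := hp'.length_le
        apply ne_of_length_lt; omega
      · have : n = m := by omega
        subst this
        exact hext n g hg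
  have hpres : ∀ n, ∀ f ∈ Fseq n, ∀ m, n ≤ m → f ∈ Tseq m ∧ succs (Tseq n) f ⊆ Tseq m := by
    intro n f hf
    have base : f ∈ Tseq n ∧ succs (Tseq n) f ⊆ Tseq n := ⟨(hF n).1 hf, fun v hv => hv.1⟩
    have step : ∀ m, n ≤ m → (f ∈ Tseq m ∧ succs (Tseq n) f ⊆ Tseq m) →
        (f ∈ Tseq (m+1) ∧ succs (Tseq n) f ⊆ Tseq (m+1)) := by
      rintro m hm ⟨hfm, hsucc⟩
      have hs2 : succs (Tseq n) f ⊆ Tseq (m+1) := by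
        intro v hv
        have hvTm : v ∈ Tseq m := hsucc hv
        obtain ⟨k, hk⟩ := hv.2
        have hfv : f <+: v := by rw [hk]; exact List.prefix_append f [k]
        have hvlen : v.length = f.length + 1 := by rw [hk]; simp
        obtain ⟨g, hgF, hcomp⟩ := front_comp (hQ m).2.2.1 (hF m) hvTm
        rcases hcomp with hc | hc
        · exact hkeep1 m v hvTm ⟨g, hgF, hc⟩
        · by_cases hgv : g = v
          · rw [hgv] at hgF
            exact hkeep1 m v hvTm ⟨v, hgF, List.prefix_rfl⟩
          · have hglen : g.length < v.length := prefix_lt_length hc hgv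
            have hgf : g <+: f := prefix_of_comp_le (prefix_total hc hfv) (by omega)
            rcases Nat.lt_or_ge n m with hlt | hge
            · obtain ⟨f', hf', hp', hne'⟩ := hdesc n m hlt g hgF
              have hff : f' <+: f := hp'.trans hgf
              have hne'' : f' ≠ f := by
                have l1 := prefix_lt_length hp' hne'
                have l2 := hgf.length_le
                apply ne_of_length_lt; omega
              exact absurd (Or.inl hff) ((hF n).2.1 f' hf' f hf hne'')
            · have hnm' : n = m := by omega
              subst hnm'
              have hgef : g = f := by
                by_cases hgf' : g = f
                · exact hgf'
                · exact absurd (Or.inl hgf) ((hF n).2.1 g hgF f hf hgf')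
              subst hgef
              exact hkeep2 n g hgF ⟨hvTm, k, hk⟩
      obtain ⟨v, hv⟩ := succs_nonempty (hQ n) ((hF n).1 hf)
      have hfv : f <+: v := by
        obtain ⟨k, hk⟩ := hv.2
        rw [hk]; exact List.prefix_append f [k]
      exact ⟨(hQ (m+1)).2.2.1 f v hfv (hs2 hv), hs2⟩
    intro m hm
    induction m with
    | zero => have : n = 0 := by omega
              subst this; exact base
    | succ m ih =>
      rcases Nat.lt_or_ge n (m+1) with hlt | hge
      · exact step m (by omega) (ih (by omega))
      · have : n = m + 1 := by omega
        subst this; exact base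
  have hFinf : ∀ n, Fseq n ⊆ Tinf := by
    intro n f hf m
    rcases le_or_gt n m with hle | hlt
    · exact (hpres n f hf m hle).1
    · exact hanti (le_of_lt hlt) ((hF n).1 hf)
  have hsuccinf : ∀ n, ∀ f ∈ Fseq n, succs (Tseq n) f ⊆ succs Tinf f := by
    intro n f hf v hv
    refine ⟨fun m => ?_, hv.2⟩
    rcases le_or_gt n m with hle | hlt
    · exact (hpres n f hf m hle).2 hv
    · exact hanti (le_of_lt hlt) hv.1
  have htreeInf : IsTree Tinf := fun s t hp ht n => (hQ n).2.2.1 s t hp (ht n)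
  have hneInf : Tinf.Nonempty := ⟨[], fun n => nil_mem_of_tree (hQ n).2.2.1 (hQ n).1⟩
  have hmeets : ∀ b, IsBranch Tinf b → ∀ n, ∃ f ∈ Fseq n, f ∈ b := by
    intro b hb n
    have hchain : IsChainIn (Tseq n) b := ⟨fun w hw => (hb.1.1 hw) n, hb.1.2⟩
    obtain ⟨bb, hbb, hbsub⟩ := exists_branch_extend hchain
    obtain ⟨f, hfb, hfF⟩ := (hF n).2.2 bb hbb
    have hfmem : f ∈ b := branch_absorb hb (hFinf n hfF)
      (fun w hw => hbb.1.2 f hfb w (hbsub hw))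
    exact ⟨f, hfF, hfmem⟩
  refine ⟨hneInf, fun s hs => (hQ 0).2.1 (hs 0), htreeInf, ?_⟩
  intro b hb m N
  set n := max N ⌈m⌉₊ + 1 with hn
  obtain ⟨f, hfF, hfb⟩ := hmeets b hb n
  refine ⟨f, hfb, le_trans (by omega) (hlen n f hfF), ?_⟩
  have hle : normOf μ (Tseq n) f ≤ normOf μ Tinf f := h.mono f _ _ (hsuccinf n f hfF)
  have h1 : m ≤ (⌈m⌉₊ : ℝ) := Nat.le_ceil m
  have h2 : ((⌈m⌉₊ : ℕ) : ℝ) < (n : ℝ) := by exact_mod_cast (by omega : ⌈m⌉₊ < n)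
  have h3 := hnorm n f hfF
  linarith

-- ############ ideal lemmas ############

lemma empty_memI {Tmax : Set (List ℕ)} {μ : List ℕ → Set (List ℕ) → ℝ} :
    memI Tmax μ (∅ : Set (ℕ → ℕ)) :=
  fun S hS => ⟨S, hS, subset_rfl, by simp⟩

lemma bUnion_mem_J {J : Set (Set (ℕ → ℕ))}
    (hJdown : ∀ X Y : Set (ℕ → ℕ), X ⊆ Y → Y ∈ J → X ∈ J)
    (hJunion : ∀ X : ℕ → Set (ℕ → ℕ), (∀ i, X i ∈ J) → (⋃ i, X i) ∈ J)
    (hempty : (∅ : Set (ℕ → ℕ)) ∈ J)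
    (U : Set (List ℕ)) (A : List ℕ → Set (ℕ → ℕ)) (hA : ∀ u ∈ U, A u ∈ J) :
    {x | ∃ u ∈ U, x ∈ A u} ∈ J := by
  classical
  set B : ℕ → Set (ℕ → ℕ) := fun i =>
    match (Encodable.decode (α := List ℕ) i) with
    | some u => if u ∈ U then A u else ∅
    | none => ∅ with hBdef
  have h1 : {x | ∃ u ∈ U, x ∈ A u} ⊆ ⋃ i, B i := by
    rintro x ⟨u, hu, hx⟩
    refine Set.mem_iUnion.mpr ⟨Encodable.encode u, ?_⟩
    have : B (Encodable.encode u) = A u := by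
      simp only [hBdef, Encodable.encodek, if_pos hu]
    rw [this]; exact hx
  refine hJdown _ _ h1 (hJunion B ?_)
  intro i
  rcases hdec : (Encodable.decode (α := List ℕ) i) with _ | u
  · have : B i = ∅ := by simp only [hBdef, hdec]
    rw [this]; exact hempty
  · by_cases hu : u ∈ U
    · have : B i = A u := by simp only [hBdef, hdec, if_pos hu]
      rw [this]; exact hA u hu
    · have : B i = ∅ := by simp only [hBdef, hdec, if_neg hu]
      rw [this]; exact hempty

-- ############ sequence builder ############

lemma exists_seq {St : Type} (P : ℕ → St → Prop) (R : ℕ → St → St → Prop)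
    (h0 : ∃ s, P 0 s) (hs : ∀ n s, P n s → ∃ s', P (n+1) s' ∧ R n s s') :
    ∃ f : ℕ → St, (∀ n, P n (f n)) ∧ ∀ n, R n (f n) (f (n+1)) := by
  choose g hg1 hg2 using hs
  let F : ∀ n : ℕ, {s : St // P n s} := fun n =>
    Nat.rec ⟨h0.choose, h0.choose_spec⟩ (fun n p => ⟨g n p.1 p.2, hg1 n p.1 p.2⟩) n
  exact ⟨fun n => (F n).1, fun n => (F n).2, fun n => hg2 n (F n).1 (F n).2⟩
-- ############ part 2 : complements ############

lemma meas_compl {Tmax : Set (List ℕ)} {μ : List ℕ → Set (List ℕ) → ℝ}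
    {J : Set (Set (ℕ → ℕ))}
    (hJdown : ∀ X Y : Set (ℕ → ℕ), X ⊆ Y → Y ∈ J → X ∈ J)
    (X : Set (ℕ → ℕ)) (hX : MeasJ Tmax μ J X) : MeasJ Tmax μ J (Lim Tmax \ X) := by
  intro T hT
  obtain ⟨S, hSQ, hST, hor⟩ := hX T hT
  have hSL : Lim S ⊆ Lim Tmax := Lim_mono hSQ.2.1
  refine ⟨S, hSQ, hST, ?_⟩
  rcases hor with h1 | h2
  · refine Or.inr (hJdown _ _ ?_ h1)
    intro x hx
    exact ⟨hx.1, by_contra fun hc => hx.2 ⟨hSL hx.1, hc⟩⟩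
  · refine Or.inl (hJdown _ _ ?_ h2)
    intro x hx
    exact ⟨hx.1, hx.2.2⟩

-- ############ part 1 : closed sets ############

lemma meas_closed {Tmax : Set (List ℕ)} {μ : List ℕ → Set (List ℕ) → ℝ}
    {J : Set (Set (ℕ → ℕ))} (h : LimSupForcing Tmax μ)
    (hempty : (∅ : Set (ℕ → ℕ)) ∈ J)
    (X : Set (ℕ → ℕ)) (hX : IsClosed X) : MeasJ Tmax μ J X := by
  intro T hT
  classical
  set T' : Set (List ℕ) := {s | ∃ c ∈ X, s = restr c s.length} with hT'def
  by_cases hcase : ∀ t ∈ T, t ∈ T'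
  · refine ⟨T, hT, subset_rfl, Or.inr ?_⟩
    have hsub : Lim T ⊆ X := by
      intro x hx
      choose c hc1 hc2 using fun n => (hcase _ (hx n) : restr x n ∈ T')
      have hcc : ∀ n, restr (c n) n = restr x n := by
        intro n
        have := hc2 n
        rw [restr_length] at this
        exact this.symm
      have htend : Filter.Tendsto c Filter.atTop (nhds x) := by
        rw [tendsto_pi_nhds]
        intro i
        apply Filter.Tendsto.congr' ?_ (tendsto_const_nhds (x := x i))
        filter_upwards [Filter.eventually_ge_atTop (i+1)] with n hn
        exact (apply_eq_of_restr_eq (hcc n) (by omega)).symm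
      exact hX.mem_of_tendsto htend (Filter.Eventually.of_forall hc1)
    have : Lim T \ X = ∅ := by
      rw [Set.diff_eq_empty]; exact hsub
    rw [this]; exact hempty
  · push_neg at hcase
    obtain ⟨t, htT, htT'⟩ := hcase
    refine ⟨restrAt T t, restrAt_memQ h hT htT, restrAt_subset, Or.inl ?_⟩
    have hemp : Lim (restrAt T t) ∩ X = ∅ := by
      rw [Set.eq_empty_iff_forall_notMem]
      rintro x ⟨hx1, hx2⟩
      have h1 : restr x t.length ∈ restrAt T t := hx1 t.length
      have h2 : restr x t.length = t := by
        rcases h1.2 with hc | hc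
        · exact hc.eq_of_length (by simp)
        · exact (hc.eq_of_length (by simp)).symm
      exact htT' ⟨x, hx2, by rw [← h2, restr_length]⟩
    rw [hemp]; exact hempty
-- ############ part 3 : countable unions ############

lemma meas_iUnion {Tmax : Set (List ℕ)} {μ : List ℕ → Set (List ℕ) → ℝ}
    {J : Set (Set (ℕ → ℕ))} (h : LimSupForcing Tmax μ)
    (hJdown : ∀ X Y : Set (ℕ → ℕ), X ⊆ Y → Y ∈ J → X ∈ J)
    (hJunion : ∀ X : ℕ → Set (ℕ → ℕ), (∀ i, X i ∈ J) → (⋃ i, X i) ∈ J)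
    (hempty : (∅ : Set (ℕ → ℕ)) ∈ J)
    (X : ℕ → Set (ℕ → ℕ)) (hX : ∀ i, MeasJ Tmax μ J (X i)) :
    MeasJ Tmax μ J (⋃ i, X i) := by
  intro T hT
  by_cases hcase : ∃ i S, memQ Tmax μ S ∧ S ⊆ T ∧ Lim S \ X i ∈ J
  · obtain ⟨i, S, hSQ, hST, hSJ⟩ := hcase
    refine ⟨S, hSQ, hST, Or.inr (hJdown _ _ ?_ hSJ)⟩
    intro x hx
    exact ⟨hx.1, fun hc => hx.2 (Set.mem_iUnion.mpr ⟨i, hc⟩)⟩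
  · push_neg at hcase
    have Hdense : ∀ S, memQ Tmax μ S → S ⊆ T → ∀ i,
        ∃ S', memQ Tmax μ S' ∧ S' ⊆ S ∧ Lim S' ∩ X i ∈ J := by
      intro S hS hST i
      obtain ⟨S', hS'Q, hS'S, hor⟩ := hX i S hS
      rcases hor with h1 | h2
      · exact ⟨S', hS'Q, hS'S, h1⟩
      · exact absurd h2 (hcase i S' hS'Q (hS'S.trans hST))
    have h0 : ∃ p : Set (List ℕ) × Set (List ℕ), memQ Tmax μ p.1 ∧ p.1 ⊆ T ∧
        IsFront p.1 p.2 ∧ ∀ f ∈ p.2, ((0:ℕ) ≤ f.length ∧ ((0:ℕ) : ℝ) < normOf μ p.1 f) := by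
      obtain ⟨F0, hF0, hF0p⟩ := exists_front h hT (0:ℝ) 0
      exact ⟨(T, F0), hT, subset_rfl, hF0,
        fun f hf => ⟨Nat.zero_le _, by simpa using (hF0p f hf).2⟩⟩
    have hstep : ∀ (n : ℕ) (p : Set (List ℕ) × Set (List ℕ)),
        (memQ Tmax μ p.1 ∧ p.1 ⊆ T ∧ IsFront p.1 p.2 ∧
          ∀ f ∈ p.2, (n ≤ f.length ∧ ((n:ℕ) : ℝ) < normOf μ p.1 f)) →
        ∃ q : Set (List ℕ) × Set (List ℕ),
          (memQ Tmax μ q.1 ∧ q.1 ⊆ T ∧ IsFront q.1 q.2 ∧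
            ∀ f ∈ q.2, ((n+1 : ℕ) ≤ f.length ∧ ((n+1 : ℕ) : ℝ) < normOf μ q.1 f)) ∧
          (q.1 ⊆ p.1 ∧ Lim q.1 ∩ X n ∈ J ∧
            (∀ g ∈ q.2, ∃ f ∈ p.2, f <+: g ∧ f ≠ g) ∧
            (∀ v ∈ p.1, (∃ g ∈ p.2, v <+: g) → v ∈ q.1) ∧
            (∀ g ∈ p.2, succs p.1 g ⊆ q.1)) := by
      rintro n ⟨Tn, Fn⟩ ⟨hTnQ, hTnT, hFn, hFprop⟩
      dsimp only at hTnQ hTnT hFn hFprop ⊢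
      set U : Set (List ℕ) := {u | ∃ t ∈ Fn, u ∈ succs Tn t} with hUdef
      have hUfront : IsFront Tn U := front_succs hTnQ hFn
      have hchoice : ∀ u : List ℕ, ∃ Su : Set (List ℕ), u ∈ U →
          (memQ Tmax μ Su ∧ Su ⊆ restrAt Tn u ∧ Lim Su ∩ X n ∈ J) := by
        intro u
        by_cases hu : u ∈ U
        · obtain ⟨S', hS'Q, hS'sub, hS'J⟩ :=
            Hdense (restrAt Tn u) (restrAt_memQ h hTnQ (hUfront.1 hu))
              (restrAt_subset.trans hTnT) n
          exact ⟨S', fun _ => ⟨hS'Q, hS'sub, hS'J⟩⟩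
        · exact ⟨∅, fun hc => absurd hc hu⟩
      choose S hS using hchoice
      have hSQ : ∀ u ∈ U, memQ Tmax μ (S u) := fun u hu => (hS u hu).1
      have hSsub : ∀ u ∈ U, S u ⊆ restrAt Tn u := fun u hu => (hS u hu).2.1
      have hSJ : ∀ u ∈ U, Lim (S u) ∩ X n ∈ J := fun u hu => (hS u hu).2.2
      obtain ⟨huS, hT'sub, hT'Q, hT'branch, hT'Lim⟩ := amalg h hTnQ hUfront hSQ hSsub
      have hchoiceG : ∀ u : List ℕ, ∃ Gu : Set (List ℕ), u ∈ U →
          (IsFront (S u) Gu ∧ ∀ g ∈ Gu,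
            (max (u.length + 1) (n+1)) ≤ g.length ∧ ((n+1 : ℕ) : ℝ) < normOf μ (S u) g) := by
        intro u
        by_cases hu : u ∈ U
        · obtain ⟨G1, hG1, hG2⟩ := exists_front h (hSQ u hu) ((n+1 : ℕ) : ℝ)
            (max (u.length+1) (n+1))
          exact ⟨G1, fun _ => ⟨hG1, hG2⟩⟩
        · exact ⟨∅, fun hc => absurd hc hu⟩
      choose G hG using hchoiceG
      have hGfront : ∀ u ∈ U, IsFront (S u) (G u) := fun u hu => (hG u hu).1
      have hGlen : ∀ u ∈ U, ∀ g ∈ G u, (max (u.length+1) (n+1)) ≤ g.length :=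
        fun u hu g hg => ((hG u hu).2 g hg).1
      have hGnorm : ∀ u ∈ U, ∀ g ∈ G u, ((n+1:ℕ):ℝ) < normOf μ (S u) g :=
        fun u hu g hg => ((hG u hu).2 g hg).2
      have hgu : ∀ u ∈ U, ∀ g ∈ G u, u <+: g ∧ u ≠ g := by
        intro u hu g hg
        have hgS : g ∈ S u := (hGfront u hu).1 hg
        have hlen := hGlen u hu g hg
        have hlen2 : u.length < g.length := by
          have := le_max_left (u.length+1) (n+1); omega
        exact ⟨prefix_of_comp_le (Or.symm (hSsub u hu hgS).2) (by omega),
          ne_of_length_lt hlen2⟩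
      have hSub' : ∀ u ∈ U, S u ⊆ {s | ∃ u ∈ U, s ∈ S u} :=
        fun u hu w hw => ⟨u, hu, hw⟩
      refine ⟨({s | ∃ u ∈ U, s ∈ S u}, {g | ∃ u ∈ U, g ∈ G u}),
        ⟨hT'Q, hT'sub.trans hTnT, ⟨?_, ?_, ?_⟩, ?_⟩, hT'sub, ?_, ?_, ?_, ?_⟩
      · -- F' ⊆ T'
        rintro g ⟨u, hu, hg⟩
        exact ⟨u, hu, (hGfront u hu).1 hg⟩
      · -- antichain
        have key : ∀ u, u ∈ U → ∀ u', u' ∈ U → ∀ x ∈ G u, ∀ y ∈ G u',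
            x <+: y → x ≠ y → False := by
          intro u hu u' hu' x hx y hy hxy hne
          have h1 : u <+: x := (hgu u hu x hx).1
          have h2 : u' <+: y := (hgu u' hu' y hy).1
          have hcomp : u <+: u' ∨ u' <+: u := prefix_total (h1.trans hxy) h2
          by_cases he : u = u'
          · subst he
            exact (hGfront u hu).2.1 x hx y hy hne (Or.inl hxy)
          · exact hUfront.2.1 u hu u' hu' he hcomp
        rintro x ⟨u, hu, hx⟩ y ⟨u', hu', hy⟩ hxy hcomp
        rcases hcomp with hc | hc
        · exact key u hu u' hu' x hx y hy hc hxy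
        · exact key u' hu' u hu y hy x hx hc (Ne.symm hxy)
      · -- meets branches
        intro b hb
        obtain ⟨u, huU, hbSu, hbr⟩ := hT'branch b hb
        obtain ⟨g, hgb, hgG⟩ := (hGfront u huU).2.2 b hbr
        exact ⟨g, hgb, u, huU, hgG⟩
      · -- lengths and norms of new front
        rintro f ⟨u, hu, hf⟩
        constructor
        · have := hGlen u hu f hf
          have := le_max_right (u.length+1) (n+1); omega
        · exact lt_of_lt_of_le (hGnorm u hu f hf)
            (norm_mono h (hSub' u hu))
      · -- Lim T' ∩ X n ∈ J
        refine hJdown _ _ ?_ (bUnion_mem_J hJdown hJunion hempty U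
          (fun u => Lim (S u) ∩ X n) hSJ)
        rintro x ⟨hx1, hx2⟩
        obtain ⟨u, hu, hmem⟩ := hT'Lim x hx1
        exact ⟨u, hu, hmem, hx2⟩
      · -- extension of fronts
        rintro g ⟨u, hu, hg⟩
        obtain ⟨f, hfFn, hfu⟩ := hu
        obtain ⟨huT, k, hk⟩ := hfu
        have hfup : f <+: u := by rw [hk]; exact List.prefix_append f [k]
        have hulen : u.length = f.length + 1 := by rw [hk]; simp
        have hug := (hgu u ⟨f, hfFn, huT, k, hk⟩ g hg).1
        refine ⟨f, hfFn, hfup.trans hug, ?_⟩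
        have := hug.length_le
        apply ne_of_length_lt; omega
      · -- keep1
        rintro v hvTn ⟨g, hgFn, hvg⟩
        obtain ⟨w, hw⟩ := succs_nonempty hTnQ (hFn.1 hgFn)
        have hwU : w ∈ U := ⟨g, hgFn, hw⟩
        obtain ⟨k, hk⟩ := hw.2
        have hgw : g <+: w := by rw [hk]; exact List.prefix_append g [k]
        exact ⟨w, hwU, (hSQ w hwU).2.2.1 v w (hvg.trans hgw) (huS w hwU)⟩
      · -- keep2
        intro g hgFn v hv
        have hvU : v ∈ U := ⟨g, hgFn, hv⟩
        exact ⟨v, hvU, huS v hvU⟩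
    obtain ⟨seq, hP, hR⟩ := exists_seq (St := Set (List ℕ) × Set (List ℕ))
      (fun n p => memQ Tmax μ p.1 ∧ p.1 ⊆ T ∧ IsFront p.1 p.2 ∧
        ∀ f ∈ p.2, (n ≤ f.length ∧ ((n:ℕ) : ℝ) < normOf μ p.1 f))
      (fun n p q => q.1 ⊆ p.1 ∧ Lim q.1 ∩ X n ∈ J ∧
        (∀ g ∈ q.2, ∃ f ∈ p.2, f <+: g ∧ f ≠ g) ∧
        (∀ v ∈ p.1, (∃ g ∈ p.2, v <+: g) → v ∈ q.1) ∧
        (∀ g ∈ p.2, succs p.1 g ⊆ q.1)) h0 hstep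
    have hfus := fusion h (fun n => (seq n).1) (fun n => (seq n).2)
      (fun n => (hP n).1) (fun n => (hP n).2.2.1)
      (fun n f hf => ((hP n).2.2.2 f hf).1)
      (fun n f hf => ((hP n).2.2.2 f hf).2)
      (fun n => (hR n).1) (fun n => (hR n).2.2.1)
      (fun n => (hR n).2.2.2.1) (fun n => (hR n).2.2.2.2)
    refine ⟨{s | ∀ n, s ∈ (seq n).1}, hfus, ?_, Or.inl ?_⟩
    · intro s hs
      exact (hP 0).2.1 (hs 0)
    · refine hJdown _ _ ?_
        (hJunion (fun i => Lim (seq (i+1)).1 ∩ X i) (fun i => (hR i).2.1))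
      rintro x ⟨hx1, hx2⟩
      obtain ⟨i, hxi⟩ := Set.mem_iUnion.mp hx2
      exact Set.mem_iUnion.mpr ⟨i, fun n => hx1 n (i+1), hxi⟩

end Sacch

open Sacch in
/-- For any σ-ideal `J` on the branch space extending `𝕀`, the family of
`J`-measurable sets contains all closed subsets of `lim(Tmax)` and is closed
under complements and countable unions. -/
theorem measurable_sets (Tmax : Set (List ℕ)) (μ : List ℕ → Set (List ℕ) → ℝ)
    (h : LimSupForcing Tmax μ) (J : Set (Set (ℕ → ℕ)))
    (hJdown : ∀ X Y : Set (ℕ → ℕ), X ⊆ Y → Y ∈ J → X ∈ J)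
    (hJunion : ∀ X : ℕ → Set (ℕ → ℕ), (∀ i, X i ∈ J) → (⋃ i, X i) ∈ J)
    (hIJ : ∀ X, memI Tmax μ X → X ∈ J) :
    (∀ X : Set (ℕ → ℕ), IsClosed X → X ⊆ Lim Tmax → MeasJ Tmax μ J X) ∧
    (∀ X : Set (ℕ → ℕ), MeasJ Tmax μ J X → MeasJ Tmax μ J (Lim Tmax \ X)) ∧
    (∀ X : ℕ → Set (ℕ → ℕ), (∀ i, MeasJ Tmax μ J (X i)) →
      MeasJ Tmax μ J (⋃ i, X i)) := by
  have hempty : (∅ : Set (ℕ → ℕ)) ∈ J := hIJ ∅ empty_memI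
  exact ⟨fun X hXc _ => meas_closed h hempty X hXc,
    fun X hX => meas_compl hJdown X hX,
    fun X hX => meas_iUnion h hJdown hJunion hempty X hX⟩
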